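/- Let α/β = [b_1, b_2, ..., b_r] with all b_i ≥ 2 and let [c_1, ..., c_k] be the dual expansion of [b_2, ..., b_r] (i.e., if [b_2,...,b_r] = α'/β' then α'/(α'−β') = [c_1,...,c_k]). Then the dual expansion [a_1, ..., a_n] of α/β satisfies [a_1, ..., a_n] = [2, 2, ..., 2, c_1 + 1, c_2, ..., c_k] with exactly (b_1 − 2) leading 2's. -/

import Mathlib

/-!
Write `x^∨ = x / (x - 1)`, so that the dual expansion of `x` is the expansion of `x^∨`.
Two identities drive the proof: `2 - 1 / x^∨ = (x + 1)^∨`, so prefixing `m` twos to an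
expansion of `x^∨` expands `(x + m)^∨`; and `x^∨ + 1 = (2 - 1/x)^∨`. With `x = [b₂,…,b_r]`
and `m = b₁ - 2`, the list `[2,…,2, c₁+1, c₂,…,c_k]` therefore expands `(b₁ - 1/x)^∨`,
the dual of `α/β`, and expansions with entries `≥ 2` are unique.
-/

/-- Negative (Hirzebruch–Jung) continued fraction:
`[b] = b`, `[b₁,...,b_r] = b₁ - 1/[b₂,...,b_r]`. -/
def ncf : List ℤ → ℚ
  | [] => 0
  | b :: l => if l = [] then (b : ℚ) else (b : ℚ) - 1 / ncf l

@[simp]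
lemma ncf_singleton (b : ℤ) : ncf [b] = b := by simp [ncf]

lemma ncf_cons {l : List ℤ} (b : ℤ) (hl : l ≠ []) : ncf (b :: l) = b - (ncf l)⁻¹ := by
  simp [ncf, hl]

lemma ncf_add_one_cons (c : ℤ) (C : List ℤ) : ncf ((c + 1) :: C) = ncf (c :: C) + 1 := by
  rcases eq_or_ne C [] with rfl | hC
  · simp
  · rw [ncf_cons _ hC, ncf_cons _ hC]; push_cast; ring

lemma one_lt_ncf {l : List ℤ} (hl : l ≠ []) (h2 : ∀ x ∈ l, 2 ≤ x) : 1 < ncf l := by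
  induction l with
  | nil => contradiction
  | cons b t ih =>
    have hb : (2 : ℚ) ≤ b := by exact_mod_cast h2 b List.mem_cons_self
    rcases eq_or_ne t [] with rfl | ht
    · rw [ncf_singleton]; linarith
    · have ht1 := ih ht fun x hx => h2 x (List.mem_cons_of_mem _ hx)
      have : (ncf t)⁻¹ < 1 := inv_lt_one_of_one_lt₀ ht1
      rw [ncf_cons b ht]; linarith

lemma ncf_cons_mem_Ioo {t : List ℤ} (b : ℤ) (ht : t ≠ []) (h2 : ∀ x ∈ t, 2 ≤ x) :
    ncf (b :: t) ∈ Set.Ioo ((b : ℚ) - 1) b := by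
  have ht1 := one_lt_ncf ht h2
  have : (ncf t)⁻¹ < 1 := inv_lt_one_of_one_lt₀ ht1
  have : 0 < (ncf t)⁻¹ := by positivity
  rw [ncf_cons b ht]
  constructor <;> linarith

lemma ceil_ncf_cons (b : ℤ) (t : List ℤ) (h2 : ∀ x ∈ t, 2 ≤ x) : ⌈ncf (b :: t)⌉ = b := by
  rcases eq_or_ne t [] with rfl | ht
  · simp
  · obtain ⟨hlo, hhi⟩ := ncf_cons_mem_Ioo b ht h2
    exact Int.ceil_eq_iff.2 ⟨hlo, hhi.le⟩

lemma ncf_injOn : Set.InjOn ncf {l | l ≠ [] ∧ ∀ x ∈ l, 2 ≤ x} := by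
  rintro l ⟨hl, h2⟩ l' ⟨hl', h2'⟩ heq
  induction l generalizing l' with
  | nil => contradiction
  | cons b t ih =>
    rcases l' with _ | ⟨b', t'⟩
    · contradiction
    have ht2 : ∀ x ∈ t, 2 ≤ x := fun x hx => h2 x (List.mem_cons_of_mem _ hx)
    have ht2' : ∀ x ∈ t', 2 ≤ x := fun x hx => h2' x (List.mem_cons_of_mem _ hx)
    obtain rfl : b = b' := by
      rw [← ceil_ncf_cons b t ht2, ← ceil_ncf_cons b' t' ht2', heq]
    rcases eq_or_ne t [] with rfl | ht <;> rcases eq_or_ne t' [] with rfl | ht'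
    · rfl
    · have := ncf_cons_mem_Ioo b ht' ht2'
      rw [← heq, ncf_singleton] at this
      exact absurd this.2 (lt_irrefl _)
    · have := ncf_cons_mem_Ioo b ht ht2
      rw [heq, ncf_singleton] at this
      exact absurd this.2 (lt_irrefl _)
    · rw [ncf_cons b ht, ncf_cons b ht', sub_right_inj, inv_inj] at heq
      rw [ih ht ht2 ht' ht2' heq]

def ncfDual (x : ℚ) : ℚ := x / (x - 1)

lemma ncfDual_div (a b : ℚ) (hb : b ≠ 0) : ncfDual (a / b) = a / (a - b) := by
  rw [ncfDual, div_sub_one hb, div_div_div_cancel_right₀ hb]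

lemma two_sub_inv_ncfDual {x : ℚ} (hx : x ≠ 0) : 2 - (ncfDual x)⁻¹ = ncfDual (x + 1) := by
  simp only [ncfDual, add_sub_cancel_right, inv_div]
  field_simp
  ring

lemma ncfDual_add_one {x : ℚ} (hx₀ : x ≠ 0) (hx₁ : x ≠ 1) :
    ncfDual x + 1 = ncfDual (2 - x⁻¹) := by
  have : x - 1 ≠ 0 := sub_ne_zero.2 hx₁
  rw [show 2 - x⁻¹ = (2 * x - 1) / x by field_simp, ncfDual_div _ _ hx₀, ncfDual,
    show 2 * x - 1 - x = x - 1 by ring]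
  field_simp
  ring

lemma ncf_replicate_two_append {L : List ℤ} {x : ℚ} (hL : L ≠ []) (hx : 0 < x)
    (h : ncf L = ncfDual x) (m : ℕ) : ncf (List.replicate m 2 ++ L) = ncfDual (x + m) := by
  induction m with
  | zero => simpa using h
  | succ m ih =>
    rw [List.replicate_succ, List.cons_append, ncf_cons _ (by simp [hL]), ih, Int.cast_ofNat,
      two_sub_inv_ncfDual (by positivity), Nat.cast_succ, add_assoc]

theorem dual_expansion_formula_general (α β α' β' : ℤ)
    (hβ : 0 < β)
    (hβ' : 0 < β')
    (b₁ : ℤ) (T : List ℤ) (hTne : T ≠ [])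
    (h2 : ∀ x ∈ b₁ :: T, 2 ≤ x)
    (hval : ncf (b₁ :: T) = (α : ℚ) / (β : ℚ))
    (hT : ncf T = (α' : ℚ) / (β' : ℚ))
    (c₁ : ℤ) (C : List ℤ) (hC2 : ∀ x ∈ c₁ :: C, 2 ≤ x)
    (hCdual : ncf (c₁ :: C) = (α' : ℚ) / ((α' : ℚ) - (β' : ℚ)))
    (A : List ℤ) (hAne : A ≠ []) (hA2 : ∀ x ∈ A, 2 ≤ x)
    (hAdual : ncf A = (α : ℚ) / ((α : ℚ) - (β : ℚ))) :
    A = List.replicate (b₁ - 2).toNat 2 ++ ((c₁ + 1) :: C) := by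
  have hb₁ : 2 ≤ b₁ := h2 b₁ List.mem_cons_self
  have hc₁ : 2 ≤ c₁ := hC2 c₁ List.mem_cons_self
  have hT1 : 1 < ncf T := one_lt_ncf hTne fun x hx => h2 x (List.mem_cons_of_mem _ hx)
  have hT0 : 0 < ncf T := one_pos.trans hT1
  have hhead : ncf ((c₁ + 1) :: C) = ncfDual (2 - (ncf T)⁻¹) := by
    rw [ncf_add_one_cons, hCdual, ← ncfDual_div _ _ (by positivity), ← hT,
      ncfDual_add_one hT0.ne' hT1.ne']
  have hR : ncf (List.replicate (b₁ - 2).toNat 2 ++ ((c₁ + 1) :: C)) = ncf A := by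
    have hpos : 0 < 2 - (ncf T)⁻¹ := by linarith [inv_lt_one_of_one_lt₀ hT1]
    have hm : ((b₁ - 2).toNat : ℚ) = b₁ - 2 := by
      rw [← Int.cast_natCast, Int.toNat_of_nonneg (by omega), Int.cast_sub, Int.cast_ofNat]
    rw [ncf_replicate_two_append (List.cons_ne_nil _ _) hpos hhead, hm, hAdual,
      ← ncfDual_div _ _ (by positivity), ← hval, ncf_cons b₁ hTne]
    congr 1
    ring
  refine ncf_injOn ⟨hAne, hA2⟩
    ⟨List.append_ne_nil_of_right_ne_nil _ (List.cons_ne_nil _ _), ?_⟩ hR.symm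
  simp only [List.mem_append, List.mem_replicate, List.mem_cons]
  rintro x (⟨-, rfl⟩ | rfl | hx)
  · rfl
  · omega
  · exact hC2 x (List.mem_cons_of_mem _ hx)

/-- Let `α/β = [b₁, b₂, ..., b_r]` (`r ≥ 2`, all entries `≥ 2`, `0 < β < α` coprime),
let `α'/β'` (in lowest terms, `0 < β' < α'`) be the value of `[b₂,...,b_r]`, and let
`[c₁,...,c_k]` be the dual expansion of `[b₂,...,b_r]`, i.e. the expansion of
`α'/(α'-β')`. Then the dual expansion `[a₁,...,aₙ]` of `α/β` (the expansion of
`α/(α-β)`) equals `[2, ..., 2, c₁+1, c₂, ..., c_k]` with exactly `b₁ - 2`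
leading 2's. -/
theorem dual_expansion_formula (α β α' β' : ℤ)
    (hβ : 0 < β) (hβα : β < α) (hcop : Int.gcd α β = 1)
    (hβ' : 0 < β') (hβα' : β' < α') (hcop' : Int.gcd α' β' = 1)
    (b₁ : ℤ) (T : List ℤ) (hTne : T ≠ [])
    (h2 : ∀ x ∈ b₁ :: T, 2 ≤ x)
    (hval : ncf (b₁ :: T) = (α : ℚ) / (β : ℚ))
    (hT : ncf T = (α' : ℚ) / (β' : ℚ))
    (c₁ : ℤ) (C : List ℤ) (hC2 : ∀ x ∈ c₁ :: C, 2 ≤ x)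
    (hCdual : ncf (c₁ :: C) = (α' : ℚ) / ((α' : ℚ) - (β' : ℚ)))
    (A : List ℤ) (hAne : A ≠ []) (hA2 : ∀ x ∈ A, 2 ≤ x)
    (hAdual : ncf A = (α : ℚ) / ((α : ℚ) - (β : ℚ))) :
    A = List.replicate (b₁ - 2).toNat 2 ++ ((c₁ + 1) :: C) :=
  dual_expansion_formula_general α β α' β' hβ hβ' b₁ T hTne h2 hval hT c₁ C hC2 hCdual A hAne hA2
    hAdual
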